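/- Let A₁,…,A_n and B₁,…,B_n be algebras with homomorphisms B_k → A_k, and let A = A₁ × ⋯ × A_n, B = B₁ × ⋯ × B_n with the product homomorphism B → A. Then A over B is depth two if and only if A_k over B_k is depth two for each k. -/

import Mathlib

open TensorProduct LinearMap

noncomputable section

variable {K : Type*} [CommRing K] {A B : Type*} [Ring A] [Ring B] [Algebra K A] [Algebra K B]

/-- Left multiplication by `a` on the first tensorand of `A ⊗[K] A`. -/
def lmulT (a : A) : A ⊗[K] A →ₗ[K] A ⊗[K] A := rTensor A (mulLeft K a)

/-- Right multiplication by `a` on the second tensorand of `A ⊗[K] A`. -/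
def rmulT (a : A) : A ⊗[K] A →ₗ[K] A ⊗[K] A := lTensor A (mulRight K a)

/-- The relations defining `A ⊗_B A` as a quotient of `A ⊗[K] A`; working modulo
`relJ f` amounts to working in the tensor square `A ⊗_B A` of the extension `f`. -/
def relJ (f : B →ₐ[K] A) : Submodule K (A ⊗[K] A) :=
  Submodule.span K {z | ∃ x b y, z = (x * f b) ⊗ₜ[K] y - x ⊗ₜ[K] (f b * y)}

/-- `α` is a `B`-`B`-bimodule endomorphism of `A`. -/
def IsBB (f : B →ₐ[K] A) (α : A →ₗ[K] A) : Prop :=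
  (∀ b x, α (f b * x) = f b * α x) ∧ (∀ b x, α (x * f b) = α x * f b)

/-- `t` represents a `B`-central element of `A ⊗_B A`. -/
def IsCent (f : B →ₐ[K] A) (t : A ⊗[K] A) : Prop :=
  ∀ b, lmulT (K := K) (f b) t - rmulT (f b) t ∈ relJ f

/-- `A ⊗_B A` is isomorphic, as a `B`-`A`-bimodule, to a direct summand of `A^N`
for some positive `N`: there is a split mono `ι` (with splitting `π`), both maps
being `B`-`A`-bimodule maps (everything taken modulo the relations `relJ f`). -/
def LeftD2 (f : B →ₐ[K] A) : Prop :=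
  ∃ N : ℕ, 0 < N ∧ ∃ (ι : A ⊗[K] A →ₗ[K] (Fin N → A)) (π : (Fin N → A) →ₗ[K] A ⊗[K] A),
    (∀ z ∈ relJ f, ι z = 0) ∧
    (∀ b z, ι (lmulT (f b) z) = fun i => f b * ι z i) ∧
    (∀ a z, ι (rmulT a z) = fun i => ι z i * a) ∧
    (∀ b (v : Fin N → A), π (fun i => f b * v i) - lmulT (f b) (π v) ∈ relJ f) ∧
    (∀ a (v : Fin N → A), π (fun i => v i * a) - rmulT a (π v) ∈ relJ f) ∧
    (∀ z, π (ι z) - z ∈ relJ f)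

/-- `A ⊗_B A` is isomorphic, as an `A`-`B`-bimodule, to a direct summand of `A^N`. -/
def RightD2 (f : B →ₐ[K] A) : Prop :=
  ∃ N : ℕ, 0 < N ∧ ∃ (ι : A ⊗[K] A →ₗ[K] (Fin N → A)) (π : (Fin N → A) →ₗ[K] A ⊗[K] A),
    (∀ z ∈ relJ f, ι z = 0) ∧
    (∀ a z, ι (lmulT a z) = fun i => a * ι z i) ∧
    (∀ b z, ι (rmulT (f b) z) = fun i => ι z i * f b) ∧
    (∀ a (v : Fin N → A), π (fun i => a * v i) - lmulT a (π v) ∈ relJ f) ∧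
    (∀ b (v : Fin N → A), π (fun i => v i * f b) - rmulT (f b) (π v) ∈ relJ f) ∧
    (∀ z, π (ι z) - z ∈ relJ f)

/-- `A ⊗_B A` is isomorphic, as an `A`-`A`-bimodule, to a direct summand of `A^N`:
H-separability of the extension `f`. -/
def HSep (f : B →ₐ[K] A) : Prop :=
  ∃ N : ℕ, 0 < N ∧ ∃ (ι : A ⊗[K] A →ₗ[K] (Fin N → A)) (π : (Fin N → A) →ₗ[K] A ⊗[K] A),
    (∀ z ∈ relJ f, ι z = 0) ∧
    (∀ a z, ι (lmulT a z) = fun i => a * ι z i) ∧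
    (∀ a z, ι (rmulT a z) = fun i => ι z i * a) ∧
    (∀ a (v : Fin N → A), π (fun i => a * v i) - lmulT a (π v) ∈ relJ f) ∧
    (∀ a (v : Fin N → A), π (fun i => v i * a) - rmulT a (π v) ∈ relJ f) ∧
    (∀ z, π (ι z) - z ∈ relJ f)

/-!
Write `eᵢ` for the `i`-th unit idempotent of `Π Aᵢ`; it lies in the image of `Π Bᵢ`. Modulo the
relations of `A ⊗_B A` one has `x ⊗ y = ∑ᵢ x eᵢ ⊗ y ≡ ∑ᵢ x eᵢ ⊗ eᵢ y`, so the tensor square of the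
product is the product of the tensor squares `Aᵢ ⊗_{Bᵢ} Aᵢ`, compatibly with the bimodule
structures. A splitting of `A ⊗_B A` off `A^N` therefore cuts down along `eᵢ` to a splitting of
`Aᵢ ⊗_{Bᵢ} Aᵢ` off `Aᵢ^N`, and splittings of the factors off `Aᵢ^{Nᵢ}` assemble to a splitting off
`A^{∑ Nᵢ}`, padded by one zero coordinate to keep the exponent positive.
-/

@[simp]
theorem lmulT_tmul (a x y : A) : lmulT (K := K) a (x ⊗ₜ y) = (a * x) ⊗ₜ y := rfl

@[simp]
theorem rmulT_tmul (a x y : A) : rmulT (K := K) a (x ⊗ₜ y) = x ⊗ₜ (y * a) := rfl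

theorem lmulT_one : lmulT (K := K) (1 : A) = LinearMap.id := by
  simp [lmulT, LinearMap.mulLeft_one]

theorem mul_tmul_sub_tmul_mul_mem_relJ (f : B →ₐ[K] A) (x : A) (b : B) (y : A) :
    (x * f b) ⊗ₜ[K] y - x ⊗ₜ[K] (f b * y) ∈ relJ f :=
  Submodule.subset_span ⟨x, b, y, rfl⟩

section MapTensorSquare

variable {A' B' : Type*} [Ring A'] [Ring B'] [Algebra K A'] [Algebra K B']

theorem map_lmulT (g : A →ₗ[K] A') {a : A} {a' : A'} (h : ∀ x, g (a * x) = a' * g x)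
    (z : A ⊗[K] A) : map g g (lmulT a z) = lmulT a' (map g g z) := by
  induction z using TensorProduct.induction_on with
  | zero => simp
  | tmul x y => simp [h]
  | add u v hu hv => simp [hu, hv]

theorem map_rmulT (g : A →ₗ[K] A') {a : A} {a' : A'} (h : ∀ x, g (x * a) = g x * a')
    (z : A ⊗[K] A) : map g g (rmulT a z) = rmulT a' (map g g z) := by
  induction z using TensorProduct.induction_on with
  | zero => simp
  | tmul x y => simp [h]
  | add u v hu hv => simp [hu, hv]

theorem relJ_le_comap_map (g : A →ₗ[K] A') (hg : ∀ x y, g (x * y) = g x * g y)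
    {f : B →ₐ[K] A} {f' : B' →ₐ[K] A'} (hf : ∀ b, ∃ b', g (f b) = f' b') :
    relJ f ≤ (relJ f').comap (map g g) := by
  refine Submodule.span_le.mpr ?_
  rintro _ ⟨x, b, y, rfl⟩
  obtain ⟨b', hb'⟩ := hf b
  exact Submodule.subset_span ⟨g x, b', g y, by simp [hg, hb']⟩

end MapTensorSquare

/-- `A ⊗_B A` as a direct summand of `A^σ`, compatibly with left multiplication by the elements
of `SL` and right multiplication by the elements of `SR`. -/
structure TensorSquareSummand (f : B →ₐ[K] A) (SL SR : Set A) (σ : Type*) where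
  ι : A ⊗[K] A →ₗ[K] σ → A
  π : (σ → A) →ₗ[K] A ⊗[K] A
  ι_eq_zero : ∀ z ∈ relJ f, ι z = 0
  ι_lmulT : ∀ a ∈ SL, ∀ z, ι (lmulT a z) = fun s => a * ι z s
  ι_rmulT : ∀ a ∈ SR, ∀ z, ι (rmulT a z) = fun s => ι z s * a
  π_lmulT : ∀ a ∈ SL, ∀ v : σ → A, π (fun s => a * v s) - lmulT a (π v) ∈ relJ f
  π_rmulT : ∀ a ∈ SR, ∀ v : σ → A, π (fun s => v s * a) - rmulT a (π v) ∈ relJ f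
  π_ι : ∀ z, π (ι z) - z ∈ relJ f

theorem leftD2_iff (f : B →ₐ[K] A) :
    LeftD2 f ↔ ∃ N, 0 < N ∧ Nonempty (TensorSquareSummand f (Set.range f) Set.univ (Fin N)) := by
  constructor
  · rintro ⟨N, hN, ι, π, h0, h1, h2, h3, h4, h5⟩
    refine ⟨N, hN, ⟨ι, π, h0, ?_, fun a _ => h2 a, ?_, fun a _ => h4 a, h5⟩⟩
    · rintro _ ⟨b, rfl⟩; exact h1 b
    · rintro _ ⟨b, rfl⟩; exact h3 b
  · rintro ⟨N, hN, ⟨S⟩⟩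
    exact ⟨N, hN, S.ι, S.π, S.ι_eq_zero, fun b => S.ι_lmulT _ ⟨b, rfl⟩,
      fun a => S.ι_rmulT a trivial, fun b => S.π_lmulT _ ⟨b, rfl⟩, fun a => S.π_rmulT a trivial,
      S.π_ι⟩

theorem rightD2_iff (f : B →ₐ[K] A) :
    RightD2 f ↔ ∃ N, 0 < N ∧ Nonempty (TensorSquareSummand f Set.univ (Set.range f) (Fin N)) := by
  constructor
  · rintro ⟨N, hN, ι, π, h0, h1, h2, h3, h4, h5⟩
    refine ⟨N, hN, ⟨ι, π, h0, fun a _ => h1 a, ?_, fun a _ => h3 a, ?_, h5⟩⟩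
    · rintro _ ⟨b, rfl⟩; exact h2 b
    · rintro _ ⟨b, rfl⟩; exact h4 b
  · rintro ⟨N, hN, ⟨S⟩⟩
    exact ⟨N, hN, S.ι, S.π, S.ι_eq_zero, fun a => S.ι_lmulT a trivial,
      fun b => S.ι_rmulT _ ⟨b, rfl⟩, fun a => S.π_lmulT a trivial, fun b => S.π_rmulT _ ⟨b, rfl⟩,
      S.π_ι⟩

namespace TensorSquareSummand

variable {f : B →ₐ[K] A} {SL SR : Set A} {σ : Type*}

def padZero (S : TensorSquareSummand f SL SR σ) (τ : Type*) :
    TensorSquareSummand f SL SR (σ ⊕ τ) where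
  ι := (LinearEquiv.sumArrowLequivProdArrow σ τ K A).symm.toLinearMap ∘ₗ
    LinearMap.inl K _ _ ∘ₗ S.ι
  π := S.π ∘ₗ LinearMap.funLeft K A Sum.inl
  ι_eq_zero z hz := by simp [S.ι_eq_zero z hz]
  ι_lmulT a ha z := by
    funext t
    cases t <;> simp [S.ι_lmulT a ha]
  ι_rmulT a ha z := by
    funext t
    cases t <;> simp [S.ι_rmulT a ha]
  π_lmulT a ha v := S.π_lmulT a ha (v ∘ Sum.inl)
  π_rmulT a ha v := S.π_rmulT a ha (v ∘ Sum.inl)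
  π_ι z := by
    have h : LinearMap.funLeft K A Sum.inl
        ((LinearEquiv.sumArrowLequivProdArrow σ τ K A).symm (S.ι z, 0)) = S.ι z := by
      ext s; simp
    simpa [h] using S.π_ι z

def congr {τ : Type*} (S : TensorSquareSummand f SL SR σ) (e : σ ≃ τ) :
    TensorSquareSummand f SL SR τ where
  ι := (LinearEquiv.funCongrLeft K A e.symm).toLinearMap ∘ₗ S.ι
  π := S.π ∘ₗ (LinearEquiv.funCongrLeft K A e).toLinearMap
  ι_eq_zero z hz := by simp [S.ι_eq_zero z hz]
  ι_lmulT a ha z := by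
    funext t
    simp [S.ι_lmulT a ha]
  ι_rmulT a ha z := by
    funext t
    simp [S.ι_rmulT a ha]
  π_lmulT a ha v := S.π_lmulT a ha (v ∘ e)
  π_rmulT a ha v := S.π_rmulT a ha (v ∘ e)
  π_ι z := by
    have h : LinearMap.funLeft K A e (LinearMap.funLeft K A e.symm (S.ι z)) = S.ι z := by
      ext s; simp
    simpa [h] using S.π_ι z

theorem exists_fin [Fintype σ] (S : TensorSquareSummand f SL SR σ) :
    ∃ N, 0 < N ∧ Nonempty (TensorSquareSummand f SL SR (Fin N)) :=
  ⟨_, Fintype.card_pos, ⟨(S.padZero Unit).congr (Fintype.equivFin _)⟩⟩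

end TensorSquareSummand

section Pi

variable {κ : Type*} {Af Bf : κ → Type*} [∀ i, Ring (Af i)] [∀ i, Ring (Bf i)]
  [∀ i, Algebra K (Af i)] [∀ i, Algebra K (Bf i)]

def AlgHom.piMap (f : ∀ i, Bf i →ₐ[K] Af i) : (∀ i, Bf i) →ₐ[K] ∀ i, Af i :=
  AlgHom.pi fun i => (f i).comp (Pi.evalAlgHom K Bf i)

@[simp]
theorem AlgHom.piMap_apply (f : ∀ i, Bf i →ₐ[K] Af i) (b : ∀ i, Bf i) (i : κ) :
    AlgHom.piMap f b i = f i (b i) := rfl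

def tensorProj (i : κ) : (∀ j, Af j) ⊗[K] (∀ j, Af j) →ₗ[K] Af i ⊗[K] Af i :=
  map (LinearMap.proj i) (LinearMap.proj i)

theorem tensorProj_lmulT (i : κ) (a : ∀ j, Af j) (z : (∀ j, Af j) ⊗[K] (∀ j, Af j)) :
    tensorProj i (lmulT a z) = lmulT (a i) (tensorProj i z) :=
  map_lmulT _ (fun _ => rfl) z

theorem tensorProj_rmulT (i : κ) (a : ∀ j, Af j) (z : (∀ j, Af j) ⊗[K] (∀ j, Af j)) :
    tensorProj i (rmulT a z) = rmulT (a i) (tensorProj i z) :=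
  map_rmulT _ (fun _ => rfl) z

theorem tensorProj_mem_relJ (f : ∀ i, Bf i →ₐ[K] Af i) (i : κ)
    {z : (∀ j, Af j) ⊗[K] (∀ j, Af j)} (hz : z ∈ relJ (AlgHom.piMap f)) :
    tensorProj i z ∈ relJ (f i) :=
  relJ_le_comap_map _ (fun _ _ => rfl) (fun b => ⟨b i, rfl⟩) hz

variable [DecidableEq κ]

theorem AlgHom.piMap_single (f : ∀ i, Bf i →ₐ[K] Af i) (i : κ) (b : Bf i) :
    AlgHom.piMap f (Pi.single i b) = Pi.single i (f i b) :=
  funext <| Pi.apply_single (fun j => f j) (fun j => map_zero (f j)) i b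

def tensorSingle (i : κ) : Af i ⊗[K] Af i →ₗ[K] (∀ j, Af j) ⊗[K] (∀ j, Af j) :=
  map (LinearMap.single K Af i) (LinearMap.single K Af i)

theorem tensorSingle_lmulT (i : κ) (a : ∀ j, Af j) (z : Af i ⊗[K] Af i) :
    tensorSingle i (lmulT (a i) z) = lmulT a (tensorSingle i z) :=
  map_lmulT _ (fun _ => by simp [Pi.single_mul_right]) z

theorem tensorSingle_rmulT (i : κ) (a : ∀ j, Af j) (z : Af i ⊗[K] Af i) :
    tensorSingle i (rmulT (a i) z) = rmulT a (tensorSingle i z) :=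
  map_rmulT _ (fun _ => by simp [Pi.single_mul_left]) z

theorem lmulT_single_one_tensorSingle (i : κ) (z : Af i ⊗[K] Af i) :
    lmulT (Pi.single i 1) (tensorSingle i z) = tensorSingle i z := by
  rw [← tensorSingle_lmulT, Pi.single_eq_same, lmulT_one, LinearMap.id_apply]

theorem tensorProj_tensorSingle (i : κ) (z : Af i ⊗[K] Af i) :
    tensorProj i (tensorSingle i z) = z := by
  rw [tensorProj, tensorSingle, ← LinearMap.comp_apply, ← map_comp,
    LinearMap.proj_comp_single_same, map_id, LinearMap.id_apply]

theorem tensorSingle_mem_relJ (f : ∀ i, Bf i →ₐ[K] Af i) (i : κ) {z : Af i ⊗[K] Af i}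
    (hz : z ∈ relJ (f i)) : tensorSingle i z ∈ relJ (AlgHom.piMap f) :=
  relJ_le_comap_map _ (fun x y => by simp [Pi.single_mul])
    (fun b => ⟨Pi.single i b, by simp [AlgHom.piMap_single]⟩) hz

theorem sub_sum_tensorSingle_tensorProj_mem_relJ [Fintype κ] (f : ∀ i, Bf i →ₐ[K] Af i)
    (z : (∀ j, Af j) ⊗[K] (∀ j, Af j)) :
    z - ∑ i, tensorSingle i (tensorProj i z) ∈ relJ (AlgHom.piMap f) := by
  induction z using TensorProduct.induction_on with
  | zero => simp [(relJ _).zero_mem]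
  | add u v hu hv =>
    simpa [Finset.sum_add_distrib, add_sub_add_comm] using add_mem hu hv
  | tmul x y =>
    have hsplit : x ⊗ₜ[K] y = ∑ i, (x * Pi.single i 1) ⊗ₜ y := by
      have hone : ∑ i, Pi.single i (1 : Af i) = 1 := Finset.univ_sum_single 1
      rw [← sum_tmul, ← Finset.mul_sum, hone, mul_one]
    have hterm : ∀ i, tensorSingle i (tensorProj i (x ⊗ₜ[K] y)) =
        (x * Pi.single i 1) ⊗ₜ (Pi.single i 1 * y) := by
      intro i
      simp [tensorProj, tensorSingle, ← Pi.single_mul_left, ← Pi.single_mul_right]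
    have hgen : ∀ i, (x * Pi.single i 1) ⊗ₜ[K] y - (x * Pi.single i 1) ⊗ₜ (Pi.single i 1 * y) ∈
        relJ (AlgHom.piMap f) := by
      intro i
      have he : AlgHom.piMap f (Pi.single i 1) = Pi.single i 1 := by
        rw [AlgHom.piMap_single, map_one]
      have hidem : x * Pi.single i 1 * Pi.single i 1 = x * Pi.single i (1 : Af i) := by
        rw [mul_assoc, ← Pi.single_mul, mul_one]
      have h :=
        mul_tmul_sub_tmul_mul_mem_relJ (AlgHom.piMap f) (x * Pi.single i 1) (Pi.single i 1) y
      rwa [he, hidem] at h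
    simp only [hterm]
    rw [hsplit, ← Finset.sum_sub_distrib]
    exact Submodule.sum_mem _ fun i _ => hgen i

end Pi

namespace TensorSquareSummand

variable {κ : Type*} [DecidableEq κ] {Af Bf : κ → Type*} [∀ i, Ring (Af i)] [∀ i, Ring (Bf i)]
  [∀ i, Algebra K (Af i)] [∀ i, Algebra K (Bf i)] {f : ∀ i, Bf i →ₐ[K] Af i}

def component {SL SR : Set (∀ j, Af j)} {σ : Type*}
    (S : TensorSquareSummand (AlgHom.piMap f) SL SR σ) (i : κ) {SLi SRi : Set (Af i)}
    (hL : ∀ x ∈ SLi, Pi.single i x ∈ SL) (hR : ∀ x ∈ SRi, Pi.single i x ∈ SR)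
    (h1 : Pi.single i 1 ∈ SL) :
    TensorSquareSummand (f i) SLi SRi σ where
  ι := LinearMap.compLeft (LinearMap.proj i) σ ∘ₗ S.ι ∘ₗ tensorSingle i
  π := tensorProj i ∘ₗ S.π ∘ₗ LinearMap.compLeft (LinearMap.single K Af i) σ
  ι_eq_zero z hz := by simp [S.ι_eq_zero _ (tensorSingle_mem_relJ f i hz)]
  ι_lmulT x hx z := by
    have h := tensorSingle_lmulT i (Pi.single i x) z
    rw [Pi.single_eq_same] at h
    funext s
    simp [h, S.ι_lmulT _ (hL x hx)]
  ι_rmulT x hx z := by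
    have h := tensorSingle_rmulT i (Pi.single i x) z
    rw [Pi.single_eq_same] at h
    funext s
    simp [h, S.ι_rmulT _ (hR x hx)]
  π_lmulT x hx v := by
    have h := tensorProj_mem_relJ f i (S.π_lmulT _ (hL x hx) fun s => Pi.single i (v s))
    simpa [tensorProj_lmulT, ← Pi.single_mul, LinearMap.compLeft, Function.comp_def] using h
  π_rmulT x hx v := by
    have h := tensorProj_mem_relJ f i (S.π_rmulT _ (hR x hx) fun s => Pi.single i (v s))
    simpa [tensorProj_rmulT, ← Pi.single_mul, LinearMap.compLeft, Function.comp_def] using h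
  π_ι z := by
    -- `S.ι` lands in the `i`-th coordinate because `tensorSingle i z` is fixed by `lmulT eᵢ`.
    have hsupp : (fun s => Pi.single i (S.ι (tensorSingle i z) s i)) = S.ι (tensorSingle i z) := by
      conv_rhs => rw [← lmulT_single_one_tensorSingle, S.ι_lmulT _ h1]
      funext s
      rw [← Pi.single_mul_left, one_mul]
    have h := tensorProj_mem_relJ f i (S.π_ι (tensorSingle i z))
    simpa [hsupp, tensorProj_tensorSingle, LinearMap.compLeft, Function.comp_def] using h

def pi [Fintype κ] {SL SR : Set (∀ j, Af j)} {σ : κ → Type*} {SL' SR' : ∀ i, Set (Af i)}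
    (S : ∀ i, TensorSquareSummand (f i) (SL' i) (SR' i) (σ i))
    (hL : ∀ a ∈ SL, ∀ i, a i ∈ SL' i) (hR : ∀ a ∈ SR, ∀ i, a i ∈ SR' i) :
    TensorSquareSummand (AlgHom.piMap f) SL SR (Σ i, σ i) where
  ι := LinearMap.pi fun c =>
    LinearMap.single K Af c.1 ∘ₗ LinearMap.proj c.2 ∘ₗ (S c.1).ι ∘ₗ tensorProj c.1
  π := ∑ i, tensorSingle i ∘ₗ (S i).π ∘ₗ
    LinearMap.pi fun s => LinearMap.proj i ∘ₗ LinearMap.proj ⟨i, s⟩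
  ι_eq_zero z hz := by
    funext ⟨i, s⟩
    simp [(S i).ι_eq_zero _ (tensorProj_mem_relJ f i hz)]
  ι_lmulT a ha z := by
    funext ⟨i, s⟩
    simp [tensorProj_lmulT, (S i).ι_lmulT _ (hL a ha i), Pi.single_mul_right]
  ι_rmulT a ha z := by
    funext ⟨i, s⟩
    simp [tensorProj_rmulT, (S i).ι_rmulT _ (hR a ha i), Pi.single_mul_left]
  π_lmulT a ha v := by
    simp only [LinearMap.sum_apply, LinearMap.comp_apply, map_sum, ← Finset.sum_sub_distrib]
    refine Submodule.sum_mem _ fun i _ => ?_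
    rw [← tensorSingle_lmulT, ← map_sub]
    exact tensorSingle_mem_relJ f i ((S i).π_lmulT _ (hL a ha i) _)
  π_rmulT a ha v := by
    simp only [LinearMap.sum_apply, LinearMap.comp_apply, map_sum, ← Finset.sum_sub_distrib]
    refine Submodule.sum_mem _ fun i _ => ?_
    rw [← tensorSingle_rmulT, ← map_sub]
    exact tensorSingle_mem_relJ f i ((S i).π_rmulT _ (hR a ha i) _)
  π_ι z := by
    have h := sub_mem
      (Submodule.sum_mem (t := Finset.univ) _ fun i _ =>
        tensorSingle_mem_relJ f i ((S i).π_ι (tensorProj i z)))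
      (sub_sum_tensorSingle_tensorProj_mem_relJ f z)
    convert h using 1
    simp only [map_sub, Finset.sum_sub_distrib, sub_sub_sub_cancel_right, LinearMap.sum_apply,
      LinearMap.comp_apply]
    congr 1
    refine Finset.sum_congr rfl fun i _ => ?_
    congr 2
    ext s
    simp

end TensorSquareSummand

section PiD2

variable {κ : Type*} {Af Bf : κ → Type*} [∀ i, Ring (Af i)] [∀ i, Ring (Bf i)]
  [∀ i, Algebra K (Af i)] [∀ i, Algebra K (Bf i)] (f : ∀ i, Bf i →ₐ[K] Af i)

theorem AlgHom.single_mem_range_piMap [DecidableEq κ] (i : κ) (b : Bf i) :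
    Pi.single i (f i b) ∈ Set.range (AlgHom.piMap f) :=
  ⟨Pi.single i b, AlgHom.piMap_single f i b⟩

theorem AlgHom.apply_mem_range_of_mem_range_piMap {a : ∀ i, Af i}
    (ha : a ∈ Set.range (AlgHom.piMap f)) (i : κ) : a i ∈ Set.range (f i) :=
  let ⟨b, hb⟩ := ha; ⟨b i, hb ▸ rfl⟩

variable [Fintype κ]

theorem leftD2_piMap_iff : LeftD2 (AlgHom.piMap f) ↔ ∀ i, LeftD2 (f i) := by
  classical
  simp only [leftD2_iff]
  constructor
  · rintro ⟨N, hN, ⟨S⟩⟩ i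
    refine ⟨N, hN, ⟨S.component i ?_ (fun _ _ => trivial) ?_⟩⟩
    · rintro _ ⟨b, rfl⟩
      exact AlgHom.single_mem_range_piMap f i b
    · simpa using AlgHom.single_mem_range_piMap f i 1
  · intro h
    choose N _ S using h
    exact (TensorSquareSummand.pi (fun i => (S i).some)
      (fun _ ha => AlgHom.apply_mem_range_of_mem_range_piMap f ha) fun _ _ _ => trivial).exists_fin

theorem rightD2_piMap_iff : RightD2 (AlgHom.piMap f) ↔ ∀ i, RightD2 (f i) := by
  classical
  simp only [rightD2_iff]
  constructor
  · rintro ⟨N, hN, ⟨S⟩⟩ i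
    refine ⟨N, hN, ⟨S.component i (fun _ _ => trivial) ?_ trivial⟩⟩
    rintro _ ⟨b, rfl⟩
    exact AlgHom.single_mem_range_piMap f i b
  · intro h
    choose N _ S using h
    exact (TensorSquareSummand.pi (fun i => (S i).some) (fun _ _ _ => trivial)
      fun _ ha => AlgHom.apply_mem_range_of_mem_range_piMap f ha).exists_fin

end PiD2

/-- for a finite family of algebra extensions `B_k → A_k`, the product
extension `Π B_k → Π A_k` is depth two iff each `A_k | B_k` is depth two. -/
theorem d2_pi_iff {ι : Type*} [Fintype ι]
    (Af Bf : ι → Type*) [∀ i, Ring (Af i)] [∀ i, Ring (Bf i)]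
    [∀ i, Algebra K (Af i)] [∀ i, Algebra K (Bf i)]
    (f : ∀ i, Bf i →ₐ[K] Af i) :
    (LeftD2 (Pi.algHom K Af (fun i => (f i).comp (Pi.evalAlgHom K Bf i))) ∧
      RightD2 (Pi.algHom K Af (fun i => (f i).comp (Pi.evalAlgHom K Bf i)))) ↔
    ∀ i, LeftD2 (f i) ∧ RightD2 (f i) :=
  (and_congr (leftD2_piMap_iff f) (rightD2_piMap_iff f)).trans forall_and.symm

end
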